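/- arXiv:2301.09867 — 2 statements merged into one kernel-verified Lean document; each statement's English description precedes it below -/
import Mathlib

section
/- If G is a graph with π*(G) ≤ 3, then π*_2(G) = π*(G). -/
open Finset

/-- A single pebbling move: remove two pebbles from `u` and place one on an
adjacent vertex `v`. -/
def PebblingStep {V : Type*} [DecidableEq V] (G : SimpleGraph V) (D D' : V → ℕ) : Prop :=
  ∃ u v, G.Adj u v ∧ 2 ≤ D u ∧
    D' = Function.update (Function.update D u (D u - 2)) v (D v + 1)

/-- `D'` is obtained from `D` by an executable sequence of pebbling moves. -/
def PebblingReaches {V : Type*} [DecidableEq V] (G : SimpleGraph V) : (V → ℕ) → (V → ℕ) → Prop :=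
  Relation.ReflTransGen (PebblingStep G)

/-- A vertex `v` is `k`-reachable under `D`. -/
def KReachable {V : Type*} [DecidableEq V] (G : SimpleGraph V) (D : V → ℕ) (k : ℕ) (v : V) : Prop :=
  ∃ D', PebblingReaches G D D' ∧ k ≤ D' v

/-- A distribution is solvable if every vertex is (1-)reachable. -/
def Solvable {V : Type*} [DecidableEq V] (G : SimpleGraph V) (D : V → ℕ) : Prop :=
  ∀ v, KReachable G D 1 v

/-- The size of a pebble distribution. -/
def distSize {V : Type*} [Fintype V] (D : V → ℕ) : ℕ := ∑ v, D v

/-- The optimal pebbling number `π*`. -/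
noncomputable def optPebbling {V : Type*} [Fintype V] [DecidableEq V] (G : SimpleGraph V) : ℕ :=
  sInf {n | ∃ D : V → ℕ, Solvable G D ∧ distSize D = n}

/-- The `t`-restricted optimal pebbling number `π*_t`. -/
noncomputable def optPebblingRes {V : Type*} [Fintype V] [DecidableEq V]
    (G : SimpleGraph V) (t : ℕ) : ℕ :=
  sInf {n | ∃ D : V → ℕ, (∀ v, D v ≤ t) ∧ Solvable G D ∧ distSize D = n}

/-!
An optimal distribution with at most three pebbles either already respects the bound of two
pebbles per vertex, or consists of three pebbles on a single vertex `u`. Three pebbles on `u`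
can only ever reach `u` and its neighbours, so `u` dominates the graph, and then already two
pebbles on `u` form a solvable distribution respecting the bound.
-/

section Reach

variable {V : Type*} [DecidableEq V] (G : SimpleGraph V)

lemma solvable_one : Solvable G 1 :=
  fun _ => ⟨1, .refl, le_rfl⟩

lemma pebblingReaches_single_three {u : V} {D : V → ℕ}
    (hD : PebblingReaches G (Pi.single u 3) D) :
    D = Pi.single u 3 ∨ ∃ w, G.Adj u w ∧ D = Pi.single u 1 + Pi.single w 1 := by
  induction hD with
  | refl => exact .inl rfl
  | tail _ hstep ih =>
    obtain ⟨a, x, hax, h2, rfl⟩ := hstep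
    have hxa : x ≠ a := hax.ne.symm
    rcases ih with rfl | ⟨w, huw, rfl⟩
    · obtain rfl : a = u := by
        by_contra hau
        simp [hau] at h2
      refine .inr ⟨x, hax, funext fun v => ?_⟩
      simp only [Function.update_apply, Pi.add_apply, Pi.single_apply, if_true]
      split_ifs <;> simp_all
    · have hwu : w ≠ u := huw.ne.symm
      simp only [Pi.add_apply, Pi.single_apply] at h2
      split_ifs at h2 <;> simp_all

lemma Solvable.eq_or_adj_of_single_three {u : V} (hD : Solvable G (Pi.single u 3)) (v : V) :
    v = u ∨ G.Adj u v := by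
  obtain ⟨D, hreach, hv⟩ := hD v
  by_contra! hne
  rcases pebblingReaches_single_three G hreach with rfl | ⟨w, huw, rfl⟩
  · simp [hne.1] at hv
  · obtain rfl | hvw := eq_or_ne v w
    · exact hne.2 huw
    · simp [hne.1, hvw] at hv

lemma solvable_single_two {u : V} (hu : ∀ v, v = u ∨ G.Adj u v) :
    Solvable G (Pi.single u 2) := by
  intro v
  rcases hu v with rfl | huv
  · exact ⟨_, .refl, by simp⟩
  · exact ⟨_, .single ⟨u, v, huv, by simp, rfl⟩, by simp⟩

end Reach

section Size

variable {V : Type*} [Fintype V]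

@[simp]
lemma distSize_single [DecidableEq V] (u : V) (k : ℕ) : distSize (Pi.single u k) = k :=
  Fintype.sum_pi_single' u k

lemma eq_single_of_le_apply_of_distSize_le [DecidableEq V] {D : V → ℕ} {u : V} {k : ℕ}
    (hu : k ≤ D u) (hD : distSize D ≤ k) : D = Pi.single u k := by
  have hsplit : D u + ∑ v ∈ univ.erase u, D v = distSize D := add_sum_erase _ D (mem_univ u)
  have hrest : ∑ v ∈ univ.erase u, D v = 0 := by omega
  funext v
  obtain rfl | hvu := eq_or_ne v u
  · rw [Pi.single_eq_same]; omega
  · simpa [hvu] using sum_eq_zero_iff.mp hrest v (by simp [hvu])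

end Size

section OptPebbling

variable {V : Type*} [Fintype V] [DecidableEq V] (G : SimpleGraph V)

lemma optPebbling_le_distSize {D : V → ℕ} (hD : Solvable G D) : optPebbling G ≤ distSize D :=
  Nat.sInf_le ⟨D, hD, rfl⟩

lemma optPebblingRes_le_distSize {t : ℕ} {D : V → ℕ} (hDt : ∀ v, D v ≤ t)
    (hD : Solvable G D) : optPebblingRes G t ≤ distSize D :=
  Nat.sInf_le ⟨D, hDt, hD, rfl⟩

lemma exists_solvable_distSize_eq_optPebbling :
    ∃ D : V → ℕ, Solvable G D ∧ distSize D = optPebbling G :=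
  Nat.sInf_mem (s := {n | ∃ D : V → ℕ, Solvable G D ∧ distSize D = n})
    ⟨_, 1, solvable_one G, rfl⟩

lemma optPebbling_le_optPebblingRes {t : ℕ} (ht : 1 ≤ t) :
    optPebbling G ≤ optPebblingRes G t := by
  obtain ⟨D, -, hD, hsize⟩ : optPebblingRes G t ∈
      {n | ∃ D : V → ℕ, (∀ v, D v ≤ t) ∧ Solvable G D ∧ distSize D = n} :=
    Nat.sInf_mem ⟨_, 1, fun _ => ht, solvable_one G, rfl⟩
  exact hsize ▸ optPebbling_le_distSize G hD

end OptPebbling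

theorem restricted_eq_of_optPebbling_le_three {V : Type*} [Fintype V] [DecidableEq V]
    (G : SimpleGraph V) (h : optPebbling G ≤ 3) :
    optPebblingRes G 2 = optPebbling G := by
  refine le_antisymm ?_ (optPebbling_le_optPebblingRes G one_le_two)
  obtain ⟨D, hD, hsize⟩ := exists_solvable_distSize_eq_optPebbling G
  by_cases hD2 : ∀ v, D v ≤ 2
  · exact hsize ▸ optPebblingRes_le_distSize G hD2 hD
  obtain ⟨u, hu⟩ := not_forall.mp hD2
  obtain rfl : D = Pi.single u 3 :=
    eq_single_of_le_apply_of_distSize_le (by omega) (hsize ▸ h)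
  have hsolv : Solvable G (Pi.single u 2) :=
    solvable_single_two G (hD.eq_or_adj_of_single_three G)
  have hle : ∀ v, (Pi.single u 2 : V → ℕ) v ≤ 2 := fun v => by
    simp only [Pi.single_apply]; split <;> omega
  calc optPebblingRes G 2 ≤ distSize (Pi.single u 2) := optPebblingRes_le_distSize G hle hsolv
    _ ≤ distSize (Pi.single u 3) := by simp only [distSize_single]; omega
    _ = optPebbling G := hsize
end

section
/- For every even m ≥ 4, the graph H_m satisfies δ(H_m) = (|V(H_m)| − 3)/2 and π*_2(H_m) ≠ π*(H_m). Hence there exist graphs with minimum degree roughly half the order whose 2-restricted optimal pebbling number exceeds their optimal pebbling number. -/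
/-!
Every `u_i` and `v_i` has degree `m - 1` (its copy of `K_m` minus the mate, plus one of `v_i`, `w`),
and `w` has degree `m`.

Four pebbles on `w` solve `H_m`: every other vertex is adjacent to a neighbour of `w`, and that
neighbour can receive two pebbles. Conversely, take a solvable distribution with at most four
pebbles and at most two on each vertex. A pebble reaches an empty vertex only from a neighbour that
has gathered two pebbles, and with four pebbles in play there are only a handful of ways to gather
two pebbles on a vertex. If no vertex holds two pebbles, no move is possible at all, so each of the
`2m + 1 > 4` vertices must already hold a pebble. Otherwise the distribution is two piles of two,
or one pile of two and at most two single pebbles, and for each position of these in `H_m` there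
is an explicit vertex that none of those ways reaches.
-/

open Finset

/-- The base relation for the graph `H_m`.  Vertices `Sum.inl i` are `u_{i+1}`,
vertices `Sum.inr (Sum.inl i)` are `v_{i+1}`, and `Sum.inr (Sum.inr ())` is `w`
(so 0-based index `i` corresponds to the paper's index `i+1`; the paper's odd
indices are the 0-based even ones). Within each copy of `K_m`, the matching
pairs `{2k, 2k+1}` (0-based) are the removed edges. -/
def HmRel (m : ℕ) : (Fin m ⊕ (Fin m ⊕ Unit)) → (Fin m ⊕ (Fin m ⊕ Unit)) → Prop
  | .inl i, .inl j => i.val / 2 ≠ j.val / 2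
  | .inr (.inl i), .inr (.inl j) => i.val / 2 ≠ j.val / 2
  | .inl i, .inr (.inl j) => i = j ∧ i.val % 2 = 1
  | .inl i, .inr (.inr _) => i.val % 2 = 0
  | .inr (.inl i), .inr (.inr _) => i.val % 2 = 0
  | _, _ => False

/-- The graph `H_m` from the paper. -/
def Hm (m : ℕ) : SimpleGraph (Fin m ⊕ (Fin m ⊕ Unit)) := SimpleGraph.fromRel (HmRel m)

/-- The vertex `w` of `H_m`. -/
def hmW (m : ℕ) : Fin m ⊕ (Fin m ⊕ Unit) := Sum.inr (Sum.inr ())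

section Pebbling

variable {V : Type*} {G : SimpleGraph V} {D D' : V → ℕ} {k : ℕ} {a b c d t u : V}

theorem sum_le_distSize [Fintype V] (D : V → ℕ) (s : Finset V) :
    ∑ z ∈ s, D z ≤ distSize D :=
  sum_le_sum_of_subset (subset_univ s)

theorem single_le_distSize [Fintype V] (D : V → ℕ) (a : V) : D a ≤ distSize D := by
  simpa using sum_le_distSize D {a}

/-- The ways of putting two pebbles on `u` with at most four pebbles in play. -/
def CanGatherTwo (G : SimpleGraph V) (D : V → ℕ) (u : V) : Prop :=
  2 ≤ D u
  ∨ (∃ x, G.Adj x u ∧ 4 ≤ D x)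
  ∨ (∃ x y, x ≠ y ∧ G.Adj x u ∧ G.Adj y u ∧ 2 ≤ D x ∧ 2 ≤ D y)
  ∨ (1 ≤ D u ∧ ∃ x, G.Adj x u ∧ 2 ≤ D x)
  ∨ (1 ≤ D u ∧ ∃ x, G.Adj x u ∧ 1 ≤ D x ∧ ∃ y, G.Adj y x ∧ 2 ≤ D y)

theorem CanGatherTwo.of_support_subset_pair (hcap : ∀ v, D v ≤ 2)
    (hsupp : ∀ z, 1 ≤ D z → z = a ∨ z = b) (h : CanGatherTwo G D u) :
    u = a ∨ u = b ∨ (G.Adj a u ∧ G.Adj b u) := by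
  rcases h with hu | ⟨x, -, hx⟩ | ⟨x, y, hxy, hxu, hyu, hx, hy⟩ | ⟨hu, -⟩ | ⟨hu, -⟩
  · exact (hsupp u (by omega)).elim .inl (.inr ∘ .inl)
  · exact absurd (hcap x) (by omega)
  · rcases hsupp x (by omega) with rfl | rfl <;> rcases hsupp y (by omega) with rfl | rfl
    exacts [absurd rfl hxy, .inr (.inr ⟨hxu, hyu⟩), .inr (.inr ⟨hyu, hxu⟩), absurd rfl hxy]
  all_goals exact (hsupp u hu).elim .inl (.inr ∘ .inl)

theorem CanGatherTwo.of_support_subset_triple (hcap : ∀ v, D v ≤ 2)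
    (hpile : ∀ z, 2 ≤ D z → z = a) (hsupp : ∀ z, 1 ≤ D z → z = a ∨ z = c ∨ z = d)
    (h : CanGatherTwo G D u) :
    u = a ∨ (u = c ∧ (G.Adj a c ∨ G.Adj d c ∧ G.Adj a d)) ∨
      (u = d ∧ (G.Adj a d ∨ G.Adj c d ∧ G.Adj a c)) := by
  rcases h with hu | ⟨x, -, hx⟩ | ⟨x, y, hxy, -, -, hx, hy⟩ | ⟨hu, x, hxu, hx⟩ |
    ⟨hu, x, hxu, hx, y, hyx, hy⟩
  · exact .inl (hpile u hu)
  · exact absurd (hcap x) (by omega)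
  · exact absurd ((hpile x hx).trans (hpile y hy).symm) hxy
  · obtain rfl := hpile x hx
    rcases hsupp u hu with rfl | rfl | rfl
    exacts [.inl rfl, .inr (.inl ⟨rfl, .inl hxu⟩), .inr (.inr ⟨rfl, .inl hxu⟩)]
  · obtain rfl := hpile y hy
    have hxy : x ≠ y := hyx.ne.symm
    have hxu' : x ≠ u := hxu.ne
    rcases hsupp u hu with rfl | rfl | rfl
    · exact .inl rfl
    · rcases hsupp x hx with rfl | rfl | rfl
      exacts [absurd rfl hxy, absurd rfl hxu', .inr (.inl ⟨rfl, .inr ⟨hxu, hyx⟩⟩)]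
    · rcases hsupp x hx with rfl | rfl | rfl
      exacts [absurd rfl hxy, .inr (.inr ⟨rfl, .inr ⟨hxu, hyx⟩⟩), absurd rfl hxu']

section Moves

variable [DecidableEq V]

theorem PebblingStep.exists_add_ite_eq (h : PebblingStep G D D') :
    ∃ a b, G.Adj a b ∧ 2 ≤ D a ∧
      ∀ z, D' z + (if z = a then 2 else 0) = D z + (if z = b then 1 else 0) := by
  obtain ⟨a, b, hab, ha, rfl⟩ := h
  refine ⟨a, b, hab, ha, fun z => ?_⟩
  have := hab.ne
  by_cases hzb : z = b <;> by_cases hza : z = a <;> simp_all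

theorem kReachable_of_le (h : k ≤ D t) : KReachable G D k t :=
  ⟨D, .refl, h⟩

theorem KReachable.of_pebblingStep (hs : PebblingStep G D D') (h : KReachable G D' k t) :
    KReachable G D k t :=
  let ⟨E, hE, ht⟩ := h
  ⟨E, .head hs hE, ht⟩

theorem KReachable.one_of_adj (h : KReachable G D 2 u) (hut : G.Adj u t) : KReachable G D 1 t :=
  let ⟨E, hE, hu⟩ := h
  ⟨_, hE.tail ⟨u, t, hut, hu, rfl⟩, by simp⟩

theorem kReachable_two_of_adj (h : 4 ≤ D u) (hut : G.Adj u t) : KReachable G D 2 t := by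
  refine ⟨_, .tail (.single ⟨u, t, hut, by omega, rfl⟩) ⟨u, t, hut, ?_, rfl⟩, ?_⟩
  · simp [hut.ne]; omega
  · simp

theorem KReachable.le_or_exists_adj_kReachable_two (h : KReachable G D 1 t) :
    1 ≤ D t ∨ ∃ u, G.Adj u t ∧ KReachable G D 2 u := by
  obtain ⟨D', hD', ht⟩ := h
  induction hD' using Relation.ReflTransGen.head_induction_on with
  | refl => exact .inl ht
  | @head E E' hs _ ih =>
    rcases ih with ht' | ⟨u, hut, hu⟩
    · obtain ⟨a, b, hab, ha, hE'⟩ := hs.exists_add_ite_eq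
      have := hE' t
      by_cases htb : t = b
      · subst htb
        exact .inr ⟨a, hab, kReachable_of_le ha⟩
      · left; split_ifs at this <;> omega
    · exact .inr ⟨u, hut, hu.of_pebblingStep hs⟩

theorem PebblingReaches.eq_of_forall_le_one (hD : ∀ v, D v ≤ 1) (h : PebblingReaches G D D') :
    D' = D := by
  rcases Relation.ReflTransGen.cases_head h with rfl | ⟨E, ⟨a, -, -, ha, -⟩, -⟩
  · rfl
  · exact absurd (hD a) (by omega)

variable [Fintype V]

theorem PebblingStep.distSize_add_one (h : PebblingStep G D D') : distSize D' + 1 = distSize D := by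
  obtain ⟨a, b, -, -, hD'⟩ := h.exists_add_ite_eq
  have := Finset.sum_congr rfl (fun z (_ : z ∈ univ) => hD' z)
  simp only [Finset.sum_add_distrib, Finset.sum_ite_eq', Finset.mem_univ, if_true] at this
  unfold distSize
  omega

theorem add_le_distSize (D : V → ℕ) (hab : a ≠ b) : D a + D b ≤ distSize D := by
  simpa [Finset.sum_pair hab] using sum_le_distSize D {a, b}

theorem add_add_le_distSize (D : V → ℕ) (hab : a ≠ b) (hac : a ≠ c) (hbc : b ≠ c) :
    D a + D b + D c ≤ distSize D := by
  simpa [Finset.sum_insert, hab, hac, hbc, add_assoc] using sum_le_distSize D {a, b, c}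

theorem Solvable.card_le_distSize (h : Solvable G D) (hD : ∀ v, D v ≤ 1) :
    Fintype.card V ≤ distSize D := by
  have hpos : ∀ v, 1 ≤ D v := fun v =>
    let ⟨_, hD', hv⟩ := h v
    hD'.eq_of_forall_le_one hD ▸ hv
  simpa [distSize] using Finset.sum_le_sum fun v (_ : v ∈ univ) => hpos v

theorem eq_or_eq_of_one_le_of_two_piles (hsize : distSize D ≤ 4) (ha : 2 ≤ D a) (hb : 2 ≤ D b)
    (hab : a ≠ b) : ∀ z, 1 ≤ D z → z = a ∨ z = b := by
  intro z hz
  by_contra! h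
  exact absurd (add_add_le_distSize D hab h.1.symm h.2.symm) (by omega)

theorem exists_support_subset_triple (hsize : distSize D ≤ 4) (ha : 2 ≤ D a) :
    ∃ c d, ∀ z, 1 ≤ D z → z = a ∨ z = c ∨ z = d := by
  by_cases hc : ∃ c, c ≠ a ∧ 1 ≤ D c
  · obtain ⟨c, hca, hc⟩ := hc
    by_cases hd : ∃ d, d ≠ a ∧ d ≠ c ∧ 1 ≤ D d
    · obtain ⟨d, hda, hdc, hd⟩ := hd
      refine ⟨c, d, fun z hz => ?_⟩
      by_contra! hz'
      have := sum_le_distSize D {a, c, d, z}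
      rw [Finset.sum_insert (by simp [hca.symm, hda.symm, hz'.1.symm]),
        Finset.sum_insert (by simp [hdc.symm, hz'.2.1.symm]),
        Finset.sum_pair hz'.2.2.symm] at this
      omega
    · push Not at hd
      exact ⟨c, c, fun z hz => or_iff_not_imp_left.2 fun hza =>
        .inl (by_contra fun hzc => absurd (hd z hza hzc) (by omega))⟩
  · push Not at hc
    exact ⟨a, a, fun z hz => .inl (by_contra fun hza => absurd (hc z hza) (by omega))⟩

theorem CanGatherTwo.of_pebblingStep (hsize : distSize D ≤ 4) (hs : PebblingStep G D D')
    (h : CanGatherTwo G D' u) : CanGatherTwo G D u := by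
  have hsize' := hs.distSize_add_one
  obtain ⟨a, b, hab, ha, hD'⟩ := hs.exists_add_ite_eq
  have hne := hab.ne
  have of_two : 2 ≤ D' u → CanGatherTwo G D u := by
    intro hu
    have hDu := hD' u
    by_cases hub : u = b
    · subst hub
      simp only [if_neg hne.symm, if_true] at hDu
      exact .inr <| .inr <| .inr <| .inl ⟨by omega, a, hab, ha⟩
    · left; split_ifs at hDu <;> omega
  rcases h with hu | ⟨x, -, hx⟩ | ⟨x, y, hxy, -, -, hx, hy⟩ | ⟨hu, x, hxu, hx⟩ |
    ⟨hu, x, hxu, hx, y, hyx, hy⟩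
  · exact of_two hu
  · exact absurd (single_le_distSize D' x) (by omega)
  · exact absurd (add_le_distSize D' hxy) (by omega)
  · have hDu := hD' u
    have hDx := hD' x
    by_cases hua : u = a
    · exact .inl (hua ▸ ha)
    by_cases hub : u = b
    · subst hub
      by_cases hxa : x = a
      · subst hxa
        simp only [if_neg hne, if_true] at hDx
        exact .inr <| .inl ⟨x, hxu, by omega⟩
      · simp only [if_neg hxa, if_neg hxu.ne] at hDx
        exact .inr <| .inr <| .inl ⟨x, a, hxa, hxu, hab, by omega, ha⟩
    simp only [if_neg hua, if_neg hub] at hDu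
    by_cases hxb : x = b
    · subst hxb
      simp only [if_neg hne.symm, if_true] at hDx
      exact .inr <| .inr <| .inr <| .inr ⟨by omega, x, hxu, by omega, a, hab, ha⟩
    simp only [if_neg hxb] at hDx
    by_cases hxa : x = a
    · subst hxa
      simp only [if_true] at hDx
      exact absurd (add_le_distSize D hua) (by omega)
    · simp only [if_neg hxa] at hDx
      exact absurd (add_add_le_distSize D (Ne.symm hxa) (Ne.symm hua) hxu.ne) (by omega)
  · by_cases hyu : y = u
    · exact of_two (hyu ▸ hy)
    · exact absurd (add_add_le_distSize D' hyu hyx.ne hxu.ne.symm) (by omega)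

theorem KReachable.canGatherTwo (hsize : distSize D ≤ 4) (h : KReachable G D 2 u) :
    CanGatherTwo G D u := by
  obtain ⟨D', hD', hu⟩ := h
  induction hD' using Relation.ReflTransGen.head_induction_on with
  | refl => exact .inl hu
  | head hs _ ih =>
    have := hs.distSize_add_one
    exact (ih (by omega)).of_pebblingStep hsize hs

theorem KReachable.le_or_exists_adj_canGatherTwo (hsize : distSize D ≤ 4)
    (h : KReachable G D 1 t) : 1 ≤ D t ∨ ∃ u, G.Adj u t ∧ CanGatherTwo G D u := by
  rcases h.le_or_exists_adj_kReachable_two with ht | ⟨u, hut, hu⟩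
  · exact .inl ht
  · exact .inr ⟨u, hut, hu.canGatherTwo hsize⟩

theorem optPebbling_le (h : Solvable G D) : optPebbling G ≤ distSize D :=
  Nat.sInf_le ⟨D, h, rfl⟩

theorem le_optPebblingRes {r n : ℕ} (hr : 1 ≤ r)
    (h : ∀ D : V → ℕ, (∀ v, D v ≤ r) → Solvable G D → n ≤ distSize D) :
    n ≤ optPebblingRes G r := by
  refine le_csInf ⟨_, fun _ => 1, fun _ => hr, fun _ => kReachable_of_le le_rfl, rfl⟩ ?_
  rintro _ ⟨D, hcap, hD, rfl⟩
  exact h D hcap hD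

end Moves

end Pebbling

section BlindSpot

variable {V W : Type*} {G : SimpleGraph V} {G' : SimpleGraph W} {a b c d t : V}

def IsTwoPileBlindSpot (G : SimpleGraph V) (a b t : V) : Prop :=
  t ≠ a ∧ t ≠ b ∧ ¬G.Adj a t ∧ ¬G.Adj b t ∧
    ∀ u, G.Adj u t → ¬(G.Adj a u ∧ G.Adj b u)

def IsOnePileBlindSpot (G : SimpleGraph V) (a c d t : V) : Prop :=
  t ≠ a ∧ t ≠ c ∧ t ≠ d ∧ ¬G.Adj a t ∧
    (G.Adj c t → ¬(G.Adj a c ∨ G.Adj d c ∧ G.Adj a d)) ∧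
    (G.Adj d t → ¬(G.Adj a d ∨ G.Adj c d ∧ G.Adj a c))

theorem IsTwoPileBlindSpot.symm (h : IsTwoPileBlindSpot G a b t) : IsTwoPileBlindSpot G b a t :=
  let ⟨hta, htb, hat, hbt, hu⟩ := h
  ⟨htb, hta, hbt, hat, fun u hut hab => hu u hut hab.symm⟩

theorem IsTwoPileBlindSpot.map (φ : G ≃g G') (h : IsTwoPileBlindSpot G a b t) :
    IsTwoPileBlindSpot G' (φ a) (φ b) (φ t) := by
  obtain ⟨hta, htb, hat, hbt, hu⟩ := h
  refine ⟨φ.injective.ne hta, φ.injective.ne htb, by rwa [φ.map_adj_iff],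
    by rwa [φ.map_adj_iff], fun u hut hab => ?_⟩
  rw [← φ.apply_symm_apply u, φ.map_adj_iff, φ.map_adj_iff] at hab
  rw [← φ.apply_symm_apply u, φ.map_adj_iff] at hut
  exact hu _ hut hab

theorem IsOnePileBlindSpot.map (φ : G ≃g G') (h : IsOnePileBlindSpot G a c d t) :
    IsOnePileBlindSpot G' (φ a) (φ c) (φ d) (φ t) := by
  obtain ⟨hta, htc, htd, hat, hc, hd⟩ := h
  simp only [IsOnePileBlindSpot, φ.map_adj_iff, ne_eq, EmbeddingLike.apply_eq_iff_eq]
  exact ⟨hta, htc, htd, hat, hc, hd⟩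

theorem IsTwoPileBlindSpot.not_kReachable [Fintype V] [DecidableEq V] {D : V → ℕ}
    (hcap : ∀ v, D v ≤ 2) (hsize : distSize D ≤ 4)
    (hsupp : ∀ z, 1 ≤ D z → z = a ∨ z = b)
    (ht : IsTwoPileBlindSpot G a b t) : ¬KReachable G D 1 t := by
  obtain ⟨hta, htb, hat, hbt, hcommon⟩ := ht
  intro h
  rcases h.le_or_exists_adj_canGatherTwo hsize with h | ⟨u, hut, hu⟩
  · exact (hsupp t h).elim hta htb
  · rcases hu.of_support_subset_pair hcap hsupp with rfl | rfl | hu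
    exacts [hat hut, hbt hut, hcommon u hut hu]

theorem IsOnePileBlindSpot.not_kReachable [Fintype V] [DecidableEq V] {D : V → ℕ}
    (hcap : ∀ v, D v ≤ 2) (hsize : distSize D ≤ 4) (hpile : ∀ z, 2 ≤ D z → z = a)
    (hsupp : ∀ z, 1 ≤ D z → z = a ∨ z = c ∨ z = d)
    (ht : IsOnePileBlindSpot G a c d t) : ¬KReachable G D 1 t := by
  obtain ⟨hta, htc, htd, hat, hc, hd⟩ := ht
  intro h
  rcases h.le_or_exists_adj_canGatherTwo hsize with h | ⟨u, hut, hu⟩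
  · exact (hsupp t h).elim hta (Or.elim · htc htd)
  · rcases hu.of_support_subset_triple hcap hpile hsupp with rfl | ⟨rfl, hu⟩ | ⟨rfl, hu⟩
    exacts [hat hut, hc hut hu, hd hut hu]

end BlindSpot

def pairMate {m : ℕ} (he : Even m) (i : Fin m) : Fin m :=
  ⟨2 * (i / 2) + 1 - i % 2, by have := i.isLt; obtain ⟨k, rfl⟩ := he; omega⟩

theorem card_filter_div_two_ne {m : ℕ} (he : Even m) (i : Fin m) :
    #{j : Fin m | j.val / 2 ≠ i.val / 2} = m - 2 := by
  have hi := i.isLt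
  obtain ⟨k, rfl⟩ := he
  have hpair : ({j : Fin (k + k) | j.val / 2 = i.val / 2} : Finset _) =
      {⟨2 * (i / 2), by omega⟩, ⟨2 * (i / 2) + 1, by omega⟩} := by
    ext j; simp [Fin.ext_iff]; omega
  have := Finset.card_filter_add_card_filter_not (s := univ)
    (fun j : Fin (k + k) => j.val / 2 = i.val / 2)
  rw [hpair, Finset.card_pair (by simp [Fin.ext_iff])] at this
  simp only [card_univ, Fintype.card_fin] at this
  simp only [ne_eq]
  omega

namespace Hm

variable {m : ℕ}

def swapIso (m : ℕ) : Hm m ≃g Hm m where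
  toFun
    | .inl i => .inr (.inl i)
    | .inr (.inl i) => .inl i
    | .inr (.inr u) => .inr (.inr u)
  invFun
    | .inl i => .inr (.inl i)
    | .inr (.inl i) => .inl i
    | .inr (.inr u) => .inr (.inr u)
  left_inv x := by rcases x with i | i | u <;> rfl
  right_inv x := by rcases x with i | i | u <;> rfl
  map_rel_iff' {x y} := by
    rcases x with i | i | u <;> rcases y with j | j | u' <;> simp [Hm, HmRel, Fin.ext_iff] <;> omega

theorem swapIso_swapIso (x : Fin m ⊕ (Fin m ⊕ Unit)) : swapIso m (swapIso m x) = x := by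
  rcases x with i | i | u <;> rfl

theorem degree_inl (he : Even m) (i : Fin m) [DecidableRel (Hm m).Adj] :
    (Hm m).degree (.inl i) = m - 1 := by
  have := card_filter_div_two_ne he i
  rw [← SimpleGraph.card_neighborFinset_eq_degree, SimpleGraph.neighborFinset_eq_filter,
    Finset.card_filter, Fintype.sum_sum_type, Fintype.sum_sum_type]
  have hu :
      #{x : Fin m | ¬i = x ∧ (¬i.val / 2 = x.val / 2 ∨ ¬x.val / 2 = i.val / 2)} = m - 2 := by
    rw [← card_filter_div_two_ne he i]
    congr 1; ext x; simp [Fin.ext_iff]; omega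
  have hm : 2 ≤ m := by have := i.isLt; obtain ⟨k, rfl⟩ := he; omega
  rcases Nat.mod_two_eq_zero_or_one i with h | h <;> simp [Hm, HmRel, hu, h] <;> omega

theorem le_degree_hmW [DecidableRel (Hm m).Adj] : m ≤ (Hm m).degree (hmW m) := by
  have key := Finset.card_le_card_of_injOn (s := univ) (t := (Hm m).neighborFinset (hmW m))
    (fun j : Fin m => if j.val % 2 = 0 then .inl j else .inr (.inl ⟨j - 1, by omega⟩)) ?_ ?_
  · simpa using key
  · intro j _
    have := j.isLt
    simp only [Finset.mem_coe, SimpleGraph.mem_neighborFinset]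
    split_ifs <;> simp [Hm, HmRel, hmW] <;> omega
  · intro j _ k _ h
    dsimp only at h
    split_ifs at h <;> simp [Fin.ext_iff] at h ⊢ <;> omega

theorem minDegree_eq (hm : 0 < m) (he : Even m) [DecidableRel (Hm m).Adj] :
    (Hm m).minDegree = m - 1 := by
  refine le_antisymm ((Hm m).minDegree_le_degree (.inl ⟨0, hm⟩) |>.trans (degree_inl he _).le)
    ((Hm m).le_minDegree_of_forall_le_degree _ fun v => ?_)
  rcases v with i | i | ⟨⟩
  · exact (degree_inl he i).ge
  · rw [← (swapIso m).degree_eq]; exact (degree_inl he i).ge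
  · exact (Nat.sub_le m 1).trans le_degree_hmW

theorem exists_isTwoPileBlindSpot_inl (hm : 4 ≤ m) (he : Even m) (i : Fin m)
    (b : Fin m ⊕ (Fin m ⊕ Unit)) (hb : b ≠ .inl i) :
    ∃ t, IsTwoPileBlindSpot (Hm m) (.inl i) b t := by
  have hi := i.isLt
  rcases b with j | j | ⟨⟩
  · refine ⟨.inr (.inl (if i.val % 2 = 0 ∧ j.val = i.val + 1 then i else pairMate he i)), ?_⟩
    split_ifs <;>
      simp [IsTwoPileBlindSpot, Hm, HmRel, pairMate, Sum.forall, Fin.ext_iff] at * <;>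
      and_intros <;> intros <;> omega
  · refine ⟨if i.val / 2 = j.val / 2 then
        (if j = i then .inr (.inl (pairMate he i))
          else if i.val % 2 = 1 then .inl j else .inr (.inl i))
      else if i.val % 2 = 0 then .inr (.inl (pairMate he j))
      else if j.val % 2 = 1 then hmW m else .inl (pairMate he i), ?_⟩
    split_ifs <;>
      simp [IsTwoPileBlindSpot, Hm, HmRel, hmW, pairMate, Sum.forall, Fin.ext_iff] at * <;>
      and_intros <;> intros <;> omega
  · refine ⟨.inr (.inl (if i.val % 2 = 0 then pairMate he i
      else ⟨if i.val / 2 = 0 then 3 else 1, by split_ifs <;> omega⟩)), ?_⟩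
    split_ifs <;>
      simp [IsTwoPileBlindSpot, Hm, HmRel, pairMate, Sum.forall, Fin.ext_iff] at * <;>
      and_intros <;> intros <;> omega

theorem exists_isTwoPileBlindSpot (hm : 4 ≤ m) (he : Even m) {a b : Fin m ⊕ (Fin m ⊕ Unit)}
    (hab : a ≠ b) : ∃ t, IsTwoPileBlindSpot (Hm m) a b t := by
  have of_inr_inl (i : Fin m) (b) (hb : b ≠ .inr (.inl i)) :
      ∃ t, IsTwoPileBlindSpot (Hm m) (.inr (.inl i)) b t := by
    obtain ⟨t, ht⟩ := exists_isTwoPileBlindSpot_inl hm he i (swapIso m b)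
      fun h => hb (by rw [← swapIso_swapIso b, h]; rfl)
    have := ht.map (swapIso m)
    rw [swapIso_swapIso] at this
    exact ⟨_, this⟩
  rcases a with i | i | ⟨⟩
  · exact exists_isTwoPileBlindSpot_inl hm he i b hab.symm
  · exact of_inr_inl i b hab.symm
  rcases b with j | j | ⟨⟩
  · obtain ⟨t, ht⟩ := exists_isTwoPileBlindSpot_inl hm he j _ hab
    exact ⟨t, ht.symm⟩
  · obtain ⟨t, ht⟩ := of_inr_inl j _ hab
    exact ⟨t, ht.symm⟩
  · exact absurd rfl hab

theorem exists_isOnePileBlindSpot_inl (hm : 4 ≤ m) (he : Even m) (i : Fin m)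
    (c d : Fin m ⊕ (Fin m ⊕ Unit)) : ∃ t, IsOnePileBlindSpot (Hm m) (.inl i) c d t := by
  have hi := i.isLt
  rcases c with j | j | ⟨⟩ <;> rcases d with l | l | ⟨⟩
  · refine ⟨.inr (.inl ⟨0, by omega⟩), ?_⟩
    simp [IsOnePileBlindSpot, Hm, HmRel, Fin.ext_iff] at *
    omega
  · refine ⟨.inr (.inl ⟨if l.val % 2 = 1 then l - 1 else if l.val = 0 then 2 else 0,
      by split_ifs <;> omega⟩), ?_⟩
    split_ifs <;> simp [IsOnePileBlindSpot, Hm, HmRel, Fin.ext_iff] at * <;> omega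
  · refine ⟨.inr (.inl ⟨if i.val ≠ 1 ∧ j.val ≠ 1 then 1
      else if i.val ≠ 3 ∧ j.val ≠ 3 then 3 else 0, by split_ifs <;> omega⟩), ?_⟩
    split_ifs <;> simp [IsOnePileBlindSpot, Hm, HmRel, Fin.ext_iff] at * <;> omega
  · refine ⟨.inr (.inl ⟨if j.val % 2 = 1 then j - 1 else if j.val = 0 then 2 else 0,
      by split_ifs <;> omega⟩), ?_⟩
    split_ifs <;> simp [IsOnePileBlindSpot, Hm, HmRel, Fin.ext_iff] at * <;> omega
  · refine ⟨.inl (pairMate he i), ?_⟩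
    simp [IsOnePileBlindSpot, Hm, HmRel, pairMate, Fin.ext_iff] at *
    omega
  · refine ⟨if i.val % 2 = 1 then .inl (pairMate he i) else
      .inr (.inl ⟨if j.val % 2 = 0 then j + 1 else if j.val = 1 then 3 else 1, by
        obtain ⟨k, rfl⟩ := he; split_ifs <;> omega⟩), ?_⟩
    split_ifs <;> simp [IsOnePileBlindSpot, Hm, HmRel, pairMate, Fin.ext_iff] at * <;> omega
  · refine ⟨.inr (.inl ⟨if i.val ≠ 1 ∧ l.val ≠ 1 then 1
      else if i.val ≠ 3 ∧ l.val ≠ 3 then 3 else 0, by split_ifs <;> omega⟩), ?_⟩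
    split_ifs <;> simp [IsOnePileBlindSpot, Hm, HmRel, Fin.ext_iff] at * <;> omega
  · refine ⟨if i.val % 2 = 1 then .inl (pairMate he i) else
      .inr (.inl ⟨if l.val % 2 = 0 then l + 1 else if l.val = 1 then 3 else 1, by
        obtain ⟨k, rfl⟩ := he; split_ifs <;> omega⟩), ?_⟩
    split_ifs <;> simp [IsOnePileBlindSpot, Hm, HmRel, pairMate, Fin.ext_iff] at * <;> omega
  · refine ⟨.inr (.inl ⟨if i.val = 1 then 3 else 1, by split_ifs <;> omega⟩), ?_⟩
    split_ifs <;> simp [IsOnePileBlindSpot, Hm, HmRel, Fin.ext_iff] at * <;> omega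

theorem exists_isOnePileBlindSpot_hmW (hm : 4 ≤ m) (he : Even m)
    (c d : Fin m ⊕ (Fin m ⊕ Unit)) : ∃ t, IsOnePileBlindSpot (Hm m) (hmW m) c d t := by
  rcases c with j | j | ⟨⟩ <;> rcases d with l | l | ⟨⟩
  · refine ⟨.inr (.inl ⟨if j.val ≠ 1 ∧ l.val ≠ 1 then 1 else 3, by split_ifs <;> omega⟩), ?_⟩
    split_ifs <;> simp [IsOnePileBlindSpot, Hm, HmRel, hmW, Fin.ext_iff] at * <;> omega
  · refine ⟨.inr (.inl ⟨if l.val % 2 = 0 then l + 1 else if l.val = 1 then 3 else 1, by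
        have := l.isLt; obtain ⟨k, rfl⟩ := he; split_ifs <;> omega⟩), ?_⟩
    split_ifs <;> simp [IsOnePileBlindSpot, Hm, HmRel, hmW, Fin.ext_iff] at * <;> omega
  · exact ⟨.inr (.inl ⟨1, by omega⟩), by simp [IsOnePileBlindSpot, Hm, HmRel, hmW, Fin.ext_iff]⟩
  · refine ⟨.inr (.inl ⟨if j.val % 2 = 0 then j + 1 else if j.val = 1 then 3 else 1, by
        have := j.isLt; obtain ⟨k, rfl⟩ := he; split_ifs <;> omega⟩), ?_⟩
    split_ifs <;> simp [IsOnePileBlindSpot, Hm, HmRel, hmW, Fin.ext_iff] at * <;> omega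
  · refine ⟨.inl ⟨if j.val ≠ 1 ∧ l.val ≠ 1 then 1 else 3, by split_ifs <;> omega⟩, ?_⟩
    split_ifs <;> simp [IsOnePileBlindSpot, Hm, HmRel, hmW, Fin.ext_iff] at * <;> omega
  · refine ⟨.inl ⟨1, by omega⟩, ?_⟩
    simp [IsOnePileBlindSpot, Hm, HmRel, hmW, Fin.ext_iff]
    omega
  · exact ⟨.inr (.inl ⟨1, by omega⟩), by simp [IsOnePileBlindSpot, Hm, HmRel, hmW, Fin.ext_iff]⟩
  · refine ⟨.inl ⟨1, by omega⟩, ?_⟩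
    simp [IsOnePileBlindSpot, Hm, HmRel, hmW, Fin.ext_iff]
    omega
  · exact ⟨.inr (.inl ⟨1, by omega⟩), by simp [IsOnePileBlindSpot, Hm, HmRel, hmW]⟩

theorem exists_isOnePileBlindSpot (hm : 4 ≤ m) (he : Even m)
    (a c d : Fin m ⊕ (Fin m ⊕ Unit)) :
    ∃ t, IsOnePileBlindSpot (Hm m) a c d t := by
  rcases a with i | i | ⟨⟩
  · exact exists_isOnePileBlindSpot_inl hm he i c d
  · obtain ⟨t, ht⟩ := exists_isOnePileBlindSpot_inl hm he i (swapIso m c) (swapIso m d)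
    have := ht.map (swapIso m)
    rw [swapIso_swapIso, swapIso_swapIso] at this
    exact ⟨_, this⟩
  · exact exists_isOnePileBlindSpot_hmW hm he c d

theorem exists_adj_hmW_adj (hm : 3 ≤ m) {v : Fin m ⊕ (Fin m ⊕ Unit)} (hv : v ≠ hmW m) :
    ∃ x, (Hm m).Adj (hmW m) x ∧ (Hm m).Adj x v := by
  rcases v with i | i | ⟨⟩
  · refine ⟨.inl ⟨if i.val / 2 = 0 then 2 else 0, by split_ifs <;> omega⟩, ?_⟩
    split_ifs <;> simp [Hm, HmRel, hmW, Fin.ext_iff] <;> omega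
  · refine ⟨.inr (.inl ⟨if i.val / 2 = 0 then 2 else 0, by split_ifs <;> omega⟩), ?_⟩
    split_ifs <;> simp [Hm, HmRel, hmW, Fin.ext_iff] <;> omega
  · exact absurd rfl hv

theorem solvable_pi_single_hmW (hm : 3 ≤ m) : Solvable (Hm m) (Pi.single (hmW m) 4) := by
  intro v
  by_cases hv : v = hmW m
  · exact kReachable_of_le (by simp [hv])
  · obtain ⟨x, hwx, hxv⟩ := exists_adj_hmW_adj hm hv
    exact (kReachable_two_of_adj (by simp) hwx).one_of_adj hxv

theorem four_lt_distSize (hm : 4 ≤ m) (he : Even m) {D : Fin m ⊕ (Fin m ⊕ Unit) → ℕ}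
    (hcap : ∀ v, D v ≤ 2) (hD : Solvable (Hm m) D) : 4 < distSize D := by
  by_contra! hsize
  by_cases hpile : ∃ a, 2 ≤ D a
  · obtain ⟨a, ha⟩ := hpile
    by_cases hpile' : ∃ b, b ≠ a ∧ 2 ≤ D b
    · obtain ⟨b, hba, hb⟩ := hpile'
      obtain ⟨t, ht⟩ := exists_isTwoPileBlindSpot hm he hba.symm
      exact ht.not_kReachable hcap hsize (eq_or_eq_of_one_le_of_two_piles hsize ha hb hba.symm)
        (hD t)
    · push Not at hpile'
      obtain ⟨c, d, hsupp⟩ := exists_support_subset_triple hsize ha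
      obtain ⟨t, ht⟩ := exists_isOnePileBlindSpot hm he a c d
      refine ht.not_kReachable hcap hsize (fun z hz => ?_) hsupp (hD t)
      by_contra hza
      exact absurd (hpile' z hza) (by omega)
  · push Not at hpile
    have := hD.card_le_distSize fun v => by have := hpile v; omega
    simp at this
    omega

end Hm

theorem Hm_large_minDegree_but_restricted_ne (m : ℕ) (hm : 4 ≤ m) (heven : Even m) :
    @SimpleGraph.minDegree _ (Hm m) _ (Classical.decRel _) =
      (Fintype.card (Fin m ⊕ (Fin m ⊕ Unit)) - 3) / 2 ∧
    optPebblingRes (Hm m) 2 ≠ optPebbling (Hm m) := by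
  refine ⟨?_, ne_of_gt ?_⟩
  · classical
    rw [Hm.minDegree_eq (by omega) heven]
    simp
    omega
  · calc optPebbling (Hm m) ≤ 4 :=
          (optPebbling_le (Hm.solvable_pi_single_hmW (by omega))).trans_eq (by simp [distSize])
      _ < optPebblingRes (Hm m) 2 :=
          le_optPebblingRes one_le_two fun _ hcap hD => Hm.four_lt_distSize hm heven hcap hD
end
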